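/- Let ψ be a holomorphic automorphism of the unit disc E having no fixed points in E. Then sup_{z ∈ E} m(z, ψ(z)) = 1, where m(z,w) := |(z − w)/(1 − z·conj(w))| is the Möbius distance on E. -/

import Mathlib

open Set Metric Complex

noncomputable section

/-- The open unit disc `E` in `ℂ`. -/
def unitDisc : Set ℂ := Metric.ball (0 : ℂ) 1

/-- The Kobayashi–Royden pseudometric of a set `D` in a complex normed space:
`κ_D(z;X) = inf {|α| : ∃ holomorphic f : E → D, f(0) = z, α·f'(0) = X}`. -/
def kobayashi {V : Type*} [NormedAddCommGroup V] [NormedSpace ℂ V]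
    (D : Set V) (z X : V) : ℝ :=
  sInf {r : ℝ | ∃ (α : ℂ) (f : ℂ → V), ‖α‖ = r ∧
    DifferentiableOn ℂ f unitDisc ∧ MapsTo f unitDisc D ∧
    f 0 = z ∧ α • deriv f 0 = X}

/-- The Hahn pseudometric of a set `D` in a complex normed space:
`h_D(z;X) = inf {|α| : ∃ injective holomorphic f : E → D, f(0) = z, α·f'(0) = X}`. -/
def hahn {V : Type*} [NormedAddCommGroup V] [NormedSpace ℂ V]
    (D : Set V) (z X : V) : ℝ :=
  sInf {r : ℝ | ∃ (α : ℂ) (f : ℂ → V), ‖α‖ = r ∧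
    DifferentiableOn ℂ f unitDisc ∧ MapsTo f unitDisc D ∧ InjOn f unitDisc ∧
    f 0 = z ∧ α • deriv f 0 = X}

/-- An automorphism of the unit disc: a biholomorphic map of `E` onto itself. -/
def IsDiscAut (φ : ℂ → ℂ) : Prop :=
  DifferentiableOn ℂ φ unitDisc ∧ MapsTo φ unitDisc unitDisc ∧
  ∃ ψ : ℂ → ℂ, DifferentiableOn ℂ ψ unitDisc ∧ MapsTo ψ unitDisc unitDisc ∧
    (∀ z ∈ unitDisc, ψ (φ z) = z) ∧ (∀ z ∈ unitDisc, φ (ψ z) = z)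

/-!
Every automorphism of the disc is `z ↦ φ_a(cz)` with `a = ψ(0)`, `|c| = 1` and
`φ_a(z) = (a - z)/(1 - āz)`: apply the Schwarz lemma to `φ_a ∘ ψ` and to its inverse.
This formula extends `ψ` continuously to the closed disc. Unless `a = 0`, which would make `0`
a fixed point, the extension moves some `ζ` on the unit circle, and two distinct points of
the circle are at Möbius distance `1`. Letting `z → ζ` inside the disc, `m(z, ψ z) → 1`,
while `m < 1` on the disc.
-/

open Filter Topology ComplexConjugate

lemma mem_unitDisc {z : ℂ} : z ∈ unitDisc ↔ ‖z‖ < 1 := mem_ball_zero_iff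

lemma zero_mem_unitDisc : (0 : ℂ) ∈ unitDisc := mem_unitDisc.2 (by simp)

lemma closure_unitDisc : closure unitDisc = closedBall (0 : ℂ) 1 := closure_ball 0 one_ne_zero

def mobiusDist (z w : ℂ) : ℝ := ‖(z - w) / (1 - z * conj w)‖

lemma normSq_one_sub_mul_conj_sub_normSq_sub (z w : ℂ) :
    normSq (1 - z * conj w) - normSq (z - w) = (1 - normSq z) * (1 - normSq w) := by
  simp only [normSq_apply, sub_re, sub_im, mul_re, mul_im, conj_re, conj_im, one_re, one_im]
  ring

lemma norm_sub_lt_norm_one_sub_mul_conj {z w : ℂ} (hz : ‖z‖ < 1) (hw : ‖w‖ < 1) :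
    ‖z - w‖ < ‖1 - z * conj w‖ := by
  have key := normSq_one_sub_mul_conj_sub_normSq_sub z w
  simp only [normSq_eq_norm_sq] at key
  have hpos : 0 < (1 - ‖z‖ ^ 2) * (1 - ‖w‖ ^ 2) := by
    apply mul_pos <;> nlinarith [norm_nonneg z, norm_nonneg w]
  rw [← sq_lt_sq₀ (norm_nonneg _) (norm_nonneg _)]
  linarith

lemma mobiusDist_lt_one {z w : ℂ} (hz : ‖z‖ < 1) (hw : ‖w‖ < 1) : mobiusDist z w < 1 := by
  have h := norm_sub_lt_norm_one_sub_mul_conj hz hw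
  rwa [mobiusDist, norm_div, div_lt_one ((norm_nonneg _).trans_lt h)]

lemma norm_one_sub_mul_conj_of_norm_eq_one (z : ℂ) {w : ℂ} (hw : ‖w‖ = 1) :
    ‖1 - z * conj w‖ = ‖w - z‖ := by
  have hww : w * conj w = 1 := by rw [mul_conj', hw]; norm_num
  calc ‖1 - z * conj w‖ = ‖conj w * (w - z)‖ := by congr 1; linear_combination -hww
    _ = ‖w - z‖ := by rw [norm_mul, norm_conj, hw, one_mul]

lemma mobiusDist_eq_one {z w : ℂ} (hw : ‖w‖ = 1) (hzw : z ≠ w) : mobiusDist z w = 1 := by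
  rw [mobiusDist, norm_div, norm_one_sub_mul_conj_of_norm_eq_one z hw, norm_sub_rev,
    div_self (norm_ne_zero_iff.2 (sub_ne_zero.2 hzw.symm))]

lemma tendsto_mobiusDist_of_norm_eq_one {F : ℂ → ℂ} {ζ : ℂ} (hF : ContinuousAt F ζ)
    (hFζ : ‖F ζ‖ = 1) (hne : ζ ≠ F ζ) :
    Tendsto (fun z => mobiusDist z (F z)) (𝓝 ζ) (𝓝 1) := by
  have hden : 1 - ζ * conj (F ζ) ≠ 0 := by
    rw [← norm_ne_zero_iff, norm_one_sub_mul_conj_of_norm_eq_one ζ hFζ, norm_ne_zero_iff,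
      sub_ne_zero]
    exact hne.symm
  rw [← mobiusDist_eq_one hFζ hne]
  unfold mobiusDist
  exact ((continuousAt_id.sub hF).div (continuousAt_const.sub
    (continuousAt_id.mul (continuous_conj.continuousAt.comp hF))) hden).norm

def mobiusInvolution (a z : ℂ) : ℂ := (a - z) / (1 - conj a * z)

section mobiusInvolution

variable {a z : ℂ}

lemma one_sub_conj_mul_ne_zero (ha : ‖a‖ < 1) (hz : ‖z‖ ≤ 1) : 1 - conj a * z ≠ 0 := by
  have h : ‖conj a * z‖ < 1 := by
    rw [norm_mul, norm_conj]
    nlinarith [norm_nonneg a, norm_nonneg z]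
  rw [sub_ne_zero]
  rintro h1
  rw [← h1, norm_one] at h
  exact lt_irrefl 1 h

lemma norm_mobiusInvolution (a z : ℂ) : ‖mobiusInvolution a z‖ = mobiusDist a z := by
  rw [mobiusInvolution, mobiusDist, norm_div, norm_div, ← norm_conj (1 - conj a * z)]
  simp only [map_sub, map_one, map_mul, conj_conj, mul_comm]

lemma mapsTo_mobiusInvolution (ha : ‖a‖ < 1) :
    MapsTo (mobiusInvolution a) unitDisc unitDisc := fun _ hz =>
  mem_unitDisc.2 <| (norm_mobiusInvolution _ _).trans_lt <|
    mobiusDist_lt_one ha (mem_unitDisc.1 hz)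

lemma norm_mobiusInvolution_of_norm_eq_one (ha : ‖a‖ < 1) (hz : ‖z‖ = 1) :
    ‖mobiusInvolution a z‖ = 1 := by
  rw [norm_mobiusInvolution, mobiusDist_eq_one hz]
  rintro rfl
  exact ha.ne hz

lemma mobiusInvolution_zero (a : ℂ) : mobiusInvolution a 0 = a := by
  simp [mobiusInvolution]

lemma mobiusInvolution_self (a : ℂ) : mobiusInvolution a a = 0 := by
  simp [mobiusInvolution]

lemma mobiusInvolution_mobiusInvolution (ha : ‖a‖ < 1) (hz : ‖z‖ ≤ 1) :
    mobiusInvolution a (mobiusInvolution a z) = z := by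
  have hD := one_sub_conj_mul_ne_zero ha hz
  have haa := one_sub_conj_mul_ne_zero ha ha.le
  have hnum : a - (a - z) / (1 - conj a * z) = z * (1 - conj a * a) / (1 - conj a * z) := by
    rw [eq_div_iff hD, sub_mul, div_mul_cancel₀ _ hD]
    ring
  have hden : 1 - conj a * ((a - z) / (1 - conj a * z)) =
      (1 - conj a * a) / (1 - conj a * z) := by
    rw [eq_div_iff hD]
    field_simp
    ring
  rw [mobiusInvolution, mobiusInvolution, hnum, hden, mul_div_assoc,
    mul_div_cancel_right₀ _ (div_ne_zero haa hD)]

lemma differentiableAt_mobiusInvolution (ha : ‖a‖ < 1) (hz : ‖z‖ ≤ 1) :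
    DifferentiableAt ℂ (mobiusInvolution a) z :=
  ((differentiableAt_const _).sub differentiableAt_id).div
    ((differentiableAt_const _).sub ((differentiableAt_const _).mul differentiableAt_id))
    (one_sub_conj_mul_ne_zero ha hz)

lemma differentiableOn_mobiusInvolution (ha : ‖a‖ < 1) :
    DifferentiableOn ℂ (mobiusInvolution a) unitDisc := fun _ hz =>
  (differentiableAt_mobiusInvolution ha (mem_unitDisc.1 hz).le).differentiableWithinAt

end mobiusInvolution

theorem exists_eqOn_mul_of_leftInvOn_unitDisc {f g : ℂ → ℂ}
    (hf : DifferentiableOn ℂ f unitDisc) (hfm : MapsTo f unitDisc unitDisc) (hf0 : f 0 = 0)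
    (hg : DifferentiableOn ℂ g unitDisc) (hgm : MapsTo g unitDisc unitDisc) (hg0 : g 0 = 0)
    (hgf : LeftInvOn g f unitDisc) :
    ∃ c : ℂ, ‖c‖ = 1 ∧ EqOn f (fun z => z * c) unitDisc := by
  have schwarz {h : ℂ → ℂ} (hd : DifferentiableOn ℂ h unitDisc)
      (hm : MapsTo h unitDisc unitDisc) (h0 : h 0 = 0) {z : ℂ} (hz : z ∈ unitDisc) :
      ‖h z‖ ≤ ‖z‖ :=
    norm_le_norm_of_mapsTo_ball hd (hm.mono_right ball_subset_closedBall) h0 (mem_unitDisc.1 hz)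
  have hhalf : (1 / 2 : ℂ) ∈ unitDisc := mem_unitDisc.2 (by norm_num)
  have hnorm : ‖f (1 / 2)‖ = ‖(1 / 2 : ℂ)‖ := le_antisymm (schwarz hf hfm hf0 hhalf) <| by
    simpa only [hgf hhalf] using schwarz hg hgm hg0 (hfm hhalf)
  have hslope : ‖dslope f 0 (1 / 2)‖ = 1 / 1 := by
    rw [dslope_of_ne f (by norm_num), slope_def_module, hf0, sub_zero, sub_zero, norm_smul,
      norm_inv, hnorm, inv_mul_cancel₀ (by norm_num), div_one]
  obtain ⟨c, hc, hfc⟩ := affine_of_mapsTo_ball_of_exists_norm_dslope_eq_div' hf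
    (by rw [hf0]; exact hfm.mono_right ball_subset_closedBall) ⟨1 / 2, hhalf, hslope⟩
  refine ⟨c, by rw [hc, div_one], fun z hz => ?_⟩
  simpa [hf0] using hfc hz

theorem IsDiscAut.exists_eqOn_mobiusInvolution {ψ : ℂ → ℂ} (hψ : IsDiscAut ψ) :
    ∃ c : ℂ, ‖c‖ = 1 ∧ EqOn ψ (fun z => mobiusInvolution (ψ 0) (z * c)) unitDisc := by
  obtain ⟨hdψ, hmψ, χ, hdχ, hmχ, hχψ, -⟩ := hψ
  set a := ψ 0
  have ha : ‖a‖ < 1 := mem_unitDisc.1 (hmψ zero_mem_unitDisc)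
  obtain ⟨c, hc, hrot⟩ := exists_eqOn_mul_of_leftInvOn_unitDisc
    (f := mobiusInvolution a ∘ ψ) (g := χ ∘ mobiusInvolution a)
    ((differentiableOn_mobiusInvolution ha).comp hdψ hmψ)
    ((mapsTo_mobiusInvolution ha).comp hmψ) (mobiusInvolution_self a)
    (hdχ.comp (differentiableOn_mobiusInvolution ha) (mapsTo_mobiusInvolution ha))
    (hmχ.comp (mapsTo_mobiusInvolution ha))
    (by simpa only [Function.comp_apply, mobiusInvolution_zero] using hχψ 0 zero_mem_unitDisc)
    (fun z hz => by
      simp only [Function.comp_apply,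
        mobiusInvolution_mobiusInvolution ha (mem_unitDisc.1 (hmψ hz)).le, hχψ z hz])
  refine ⟨c, hc, fun z hz => ?_⟩
  calc ψ z = mobiusInvolution a (mobiusInvolution a (ψ z)) :=
        (mobiusInvolution_mobiusInvolution ha (mem_unitDisc.1 (hmψ hz)).le).symm
    _ = mobiusInvolution a (z * c) := congrArg _ (hrot hz)

-- The fixed-point equations at `ζ = 1, -1, i`, cleared of denominators, force `a = 0`.
lemma exists_norm_eq_one_mobiusInvolution_mul_ne {a c : ℂ} (ha : ‖a‖ < 1) (ha0 : a ≠ 0)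
    (hc : ‖c‖ = 1) : ∃ ζ : ℂ, ‖ζ‖ = 1 ∧ mobiusInvolution a (ζ * c) ≠ ζ := by
  by_contra! hfix
  have hcleared (ζ : ℂ) (hζ : ‖ζ‖ = 1) : a - ζ * c = ζ * (1 - conj a * (ζ * c)) := by
    have hD := one_sub_conj_mul_ne_zero (z := ζ * c) ha (by rw [norm_mul, hζ, hc, one_mul])
    rw [← div_eq_iff hD]
    exact hfix ζ hζ
  have e1 := hcleared 1 (by simp)
  have e2 := hcleared (-1) (by simp)
  have e3 := hcleared I (by simp)
  apply ha0
  linear_combination (e1 + e3) / 2 + (1 + I) / 4 * (e2 - e1) - (conj a * c / 2) * I_mul_I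

/-- If `ψ` is an automorphism of the unit disc without fixed points, then
`sup_{z ∈ E} m(z, ψ(z)) = 1`, where `m` is the Möbius distance. -/
theorem stmt11 (ψ : ℂ → ℂ) (hψ : IsDiscAut ψ) (hfix : ∀ z ∈ unitDisc, ψ z ≠ z) :
    sSup ((fun z => ‖(z - ψ z) / (1 - z * (starRingEnd ℂ) (ψ z))‖) ''
      unitDisc) = 1 := by
  obtain ⟨c, hc, hψc⟩ := hψ.exists_eqOn_mobiusInvolution
  set a := ψ 0
  have ha : ‖a‖ < 1 := mem_unitDisc.1 (hψ.2.1 zero_mem_unitDisc)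
  obtain ⟨ζ, hζ, hζψ⟩ :=
    exists_norm_eq_one_mobiusInvolution_mul_ne ha (hfix 0 zero_mem_unitDisc) hc
  set F := fun z => mobiusInvolution a (z * c)
  have hζc : ‖ζ * c‖ = 1 := by rw [norm_mul, hζ, hc, one_mul]
  have hF : ContinuousAt F ζ :=
    (differentiableAt_mobiusInvolution ha hζc.le).continuousAt.comp (f := (· * c))
      (continuous_mul_const c).continuousAt
  have hlim : Tendsto (fun z => mobiusDist z (ψ z)) (𝓝[unitDisc] ζ) (𝓝 1) :=
    ((tendsto_mobiusDist_of_norm_eq_one hF (norm_mobiusInvolution_of_norm_eq_one ha hζc)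
      hζψ.symm).mono_left nhdsWithin_le_nhds).congr' <|
        eventually_nhdsWithin_of_forall fun z hz => congrArg (mobiusDist z) (hψc hz).symm
  have : (𝓝[unitDisc] ζ).NeBot := mem_closure_iff_nhdsWithin_neBot.1 <| by
    rw [closure_unitDisc, mem_closedBall_zero_iff, hζ]
  refine IsLUB.csSup_eq ⟨?_, fun b hb => ?_⟩ ⟨_, mem_image_of_mem _ zero_mem_unitDisc⟩
  · rintro _ ⟨z, hz, rfl⟩
    exact (mobiusDist_lt_one (mem_unitDisc.1 hz) (mem_unitDisc.1 (hψ.2.1 hz))).le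
  · exact le_of_tendsto hlim (eventually_nhdsWithin_of_forall fun z hz => hb ⟨z, hz, rfl⟩)
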